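/- Let n ≥ 2, let R be a commutative ℚ-algebra, and let ϖ_1,…,ϖ_{n−1} ∈ R satisfy the Peterson relations, with the convention ϖ_0 = ϖ_n = 0. Then for all integers a, i, b with 1 ≤ a ≤ i ≤ b ≤ n−1, one has (ϖ_a ϖ_{a+1} ⋯ ϖ_i)·(ϖ_i ϖ_{i+1} ⋯ ϖ_b) = ((b−i+1)/(b−a+2))·(ϖ_{a−1} ϖ_a ⋯ ϖ_b) + ((i−a+1)/(b−a+2))·(ϖ_a ϖ_{a+1} ⋯ ϖ_b ϖ_{b+1}), where each displayed product is the product of the ϖ_t over the indicated range of consecutive indices t. -/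

import Mathlib

/-!
Multiplying the Peterson relation at `j` by `P = ϖ_a ⋯ ϖ_b` (which `ϖ_j` divides for `a ≤ j ≤ b`)
shows that `y_j = ϖ_j P` is an arithmetic progression for `a - 1 ≤ j ≤ b + 1`. The left-hand side
is `y_i`, and the two products on the right are its endpoints `y_{a-1}` and `y_{b+1}`, so the
identity is linear interpolation between them.
-/

open Finset

section ArithmeticProgression

variable {M : Type*} [AddCommGroup M] {N : ℕ} {y : ℕ → M}

theorem eq_add_nsmul_of_add_eq_two_nsmul
    (h : ∀ k, k + 2 ≤ N → y k + y (k + 2) = 2 • y (k + 1)) :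
    ∀ k ≤ N, y k = y 0 + k • (y 1 - y 0) := by
  intro k
  induction k using Nat.twoStepInduction with
  | zero => simp
  | one => simp
  | more k ih₀ ih₁ =>
    intro hk
    have hstep := h k hk
    rw [ih₀ (by omega), ih₁ (by omega)] at hstep
    rw [eq_sub_of_add_eq' hstep]
    module

theorem nsmul_eq_nsmul_add_nsmul_of_add_eq_two_nsmul
    (h : ∀ k, k + 2 ≤ N → y k + y (k + 2) = 2 • y (k + 1)) {k : ℕ} (hk : k ≤ N) :
    N • y k = (N - k) • y 0 + k • y N := by
  obtain ⟨m, rfl⟩ := Nat.exists_eq_add_of_le hk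
  rw [eq_add_nsmul_of_add_eq_two_nsmul h k hk, eq_add_nsmul_of_add_eq_two_nsmul h _ le_rfl,
    Nat.add_sub_cancel_left]
  module

end ArithmeticProgression

section IntervalProducts

variable {M : Type*} [CommMonoid M] (f : ℕ → M)

theorem Finset.prod_Icc_sub_one_left {a b : ℕ} (ha : 1 ≤ a) (hab : a ≤ b + 1) :
    ∏ t ∈ Icc (a - 1) b, f t = f (a - 1) * ∏ t ∈ Icc a b, f t := by
  rw [← insert_Icc_left_eq_Icc_sub_one (by omega), prod_insert (by simp; omega)]

theorem Finset.prod_Icc_mul_prod_Icc {a i b : ℕ} (hai : a ≤ i) (hib : i ≤ b) :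
    (∏ t ∈ Icc a i, f t) * ∏ t ∈ Icc i b, f t = f i * ∏ t ∈ Icc a b, f t := by
  rw [← insert_Icc_add_one_left_eq_Icc hib, prod_insert (by simp), mul_left_comm,
    ← Ico_add_one_right_eq_Icc, ← Ico_add_one_right_eq_Icc, ← Ico_add_one_right_eq_Icc,
    prod_Ico_consecutive f (by omega) (by omega)]

end IntervalProducts

theorem smul_eq_div_smul_add_div_smul_of_nsmul_eq {M : Type*} [AddCommGroup M] [Module ℚ M]
    {N m k : ℕ} {x u v : M} (hN : N ≠ 0) (h : N • x = m • u + k • v) :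
    x = ((m : ℚ) / N) • u + ((k : ℚ) / N) • v := by
  have hN' : (N : ℚ) ≠ 0 := Nat.cast_ne_zero.mpr hN
  simp only [← Nat.cast_smul_eq_nsmul ℚ] at h
  rw [← inv_smul_smul₀ hN' x, h, smul_add, smul_smul, smul_smul, div_eq_inv_mul, div_eq_inv_mul]

theorem peterson_prod_add_eq_two_nsmul {R : Type*} [CommRing R] (ϖ : ℕ → R) {a b j : ℕ}
    (hj : j ∈ Icc a b) (hrel : ϖ j * (2 * ϖ j - ϖ (j - 1) - ϖ (j + 1)) = 0) :
    ϖ (j - 1) * ∏ t ∈ Icc a b, ϖ t + ϖ (j + 1) * ∏ t ∈ Icc a b, ϖ t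
      = 2 • (ϖ j * ∏ t ∈ Icc a b, ϖ t) := by
  have hdvd := mul_dvd_mul_right (dvd_prod_of_mem ϖ hj) (2 * ϖ j - ϖ (j - 1) - ϖ (j + 1))
  rw [hrel, zero_dvd_iff] at hdvd
  linear_combination -hdvd

theorem peterson_square_expansion (n : ℕ)
    {R : Type*} [CommRing R] [Algebra ℚ R] (ϖ : ℕ → R)
    (hrel : ∀ i : ℕ, 1 ≤ i → i ≤ n - 1 → ϖ i * (2 * ϖ i - ϖ (i - 1) - ϖ (i + 1)) = 0)
    (a i b : ℕ) (ha : 1 ≤ a) (hai : a ≤ i) (hib : i ≤ b) (hb : b ≤ n - 1) :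
    (∏ t ∈ Finset.Icc a i, ϖ t) * (∏ t ∈ Finset.Icc i b, ϖ t) =
      (((b : ℚ) - i + 1) / ((b : ℚ) - a + 2)) • (∏ t ∈ Finset.Icc (a - 1) b, ϖ t) +
      (((i : ℚ) - a + 1) / ((b : ℚ) - a + 2)) • (∏ t ∈ Finset.Icc a (b + 1), ϖ t) := by
  set P := ∏ t ∈ Icc a b, ϖ t
  have hprog : ∀ k, k + 2 ≤ b + 2 - a →
      ϖ (a - 1 + k) * P + ϖ (a - 1 + (k + 2)) * P = 2 • (ϖ (a - 1 + (k + 1)) * P) := by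
    intro k hk
    have h := peterson_prod_add_eq_two_nsmul ϖ (a := a) (b := b) (j := a + k) (by simp; omega)
      (hrel (a + k) (by omega) (by omega))
    rwa [show a + k - 1 = a - 1 + k by omega, show a + k + 1 = a - 1 + (k + 2) by omega,
      show a + k = a - 1 + (k + 1) by omega] at h
  have hinterp := nsmul_eq_nsmul_add_nsmul_of_add_eq_two_nsmul
    (y := fun k ↦ ϖ (a - 1 + k) * P) hprog (k := i + 1 - a) (by omega)
  simp only [show a - 1 + (i + 1 - a) = i by omega, show a - 1 + (b + 2 - a) = b + 1 by omega,
    show b + 2 - a - (i + 1 - a) = b + 1 - i by omega, add_zero] at hinterp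
  rw [prod_Icc_mul_prod_Icc ϖ hai hib, prod_Icc_sub_one_left ϖ ha (by omega),
    prod_Icc_succ_top (by omega), mul_comm _ (ϖ (b + 1)),
    smul_eq_div_smul_add_div_smul_of_nsmul_eq (by omega) hinterp,
    Nat.cast_sub (by omega : a ≤ b + 2), Nat.cast_sub (by omega : i ≤ b + 1),
    Nat.cast_sub (by omega : a ≤ i + 1)]
  push_cast
  congr 2 <;> ring
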